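/- If U ∈ ℝ^{m×r} has linearly independent columns u_1,…,u_r and τ_i ≠ 0 for all i, then there exists a unique nonsingular upper triangular matrix S ∈ ℝ^{r×r} such that the product (I − u_1u_1ᵀ/τ_1)(I − u_2u_2ᵀ/τ_2)⋯(I − u_ru_rᵀ/τ_r) equals I − U S⁻¹ Uᵀ, where S is obtained by taking the upper triangular part of UᵀU and halving its diagonal entries (when τ_i = ‖u_i‖²/2 for each i). -/

import Mathlib

open Matrix

/-- Upper triangular part of `UᵀU` with halved diagonal. -/
noncomputable def cwyS {m r : ℕ} (U : Matrix (Fin m) (Fin r) ℝ) :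
    Matrix (Fin r) (Fin r) ℝ :=
  Matrix.of fun i j =>
    if i = j then (Uᵀ * U) i j / 2 else if i < j then (Uᵀ * U) i j else 0

/-!
With `W = U S⁻¹`, the `j`-th column of `W S = U` reads `τ_j w_j + ∑_{i<j} (u_iᵀ u_j) w_i = u_j`,
which is exactly the identity making `(I - ∑_{i<j} w_i u_iᵀ) (I - u_j u_jᵀ / τ_j)` equal to
`I - ∑_{i≤j} w_i u_iᵀ`; induction over the columns gives `I - W Uᵀ = I - U S⁻¹ Uᵀ` for the
product. For uniqueness, linearly independent columns make `U` left-cancellable, so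
`U X Uᵀ` determines `X`, here `S⁻¹`.
-/

namespace Matrix

section CommRing

variable {R l m n : Type*} [CommRing R]

theorem mul_transpose_eq_submatrix_castSucc_add_vecMulVec {r : ℕ}
    (W U : Matrix m (Fin (r + 1)) R) :
    W * Uᵀ = W.submatrix id Fin.castSucc * (U.submatrix id Fin.castSucc)ᵀ
      + vecMulVec (Wᵀ (Fin.last r)) (Uᵀ (Fin.last r)) := by
  ext a b
  simp [mul_apply, Fin.sum_univ_castSucc, vecMulVec_apply]

variable [Fintype n]

theorem mul_right_injective_of_linearIndependent_col {U : Matrix m n R}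
    (hU : LinearIndependent R U.col) : Function.Injective fun B : Matrix n l R => U * B :=
  fun _ _ h => ext_col fun j => mulVec_injective_iff.2 hU congr(($h).col j)

theorem eq_of_mul_mul_transpose_eq {U : Matrix m n R} (hU : LinearIndependent R U.col)
    {X Y : Matrix n n R} (h : U * X * Uᵀ = U * Y * Uᵀ) : X = Y := by
  have hright : X * Uᵀ = Y * Uᵀ :=
    mul_right_injective_of_linearIndependent_col hU (by simpa only [Matrix.mul_assoc] using h)
  have hleft : U * Xᵀ = U * Yᵀ := by
    simpa only [transpose_mul, transpose_transpose] using congrArg transpose hright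
  exact transpose_inj.1 (mul_right_injective_of_linearIndependent_col hU hleft)

end CommRing

section Field

variable {K m : Type*} [Field K]

theorem isUnit_of_isUpperTriangular {n : Type*} [Fintype n] [DecidableEq n] [LinearOrder n]
    {S : Matrix n n K} (hS : S.IsUpperTriangular) (hdiag : ∀ i, S i i ≠ 0) : IsUnit S := by
  rw [isUnit_iff_isUnit_det, det_of_isUpperTriangular hS, isUnit_iff_ne_zero]
  exact Finset.prod_ne_zero_iff.2 fun i _ => hdiag i

variable [Fintype m] [DecidableEq m]

theorem one_sub_mul_one_sub_smul_vecMulVec {A : Matrix m m K} {u w : m → K} {c : K} (hc : c ≠ 0)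
    (h : c • w + A *ᵥ u = u) :
    (1 - A) * (1 - c⁻¹ • vecMulVec u u) = 1 - (A + vecMulVec w u) := by
  have hw : w = c⁻¹ • (u - A *ᵥ u) := by rw [eq_inv_smul_iff₀ hc, eq_sub_iff_add_eq, h]
  subst hw
  simp only [smul_vecMulVec, sub_vecMulVec, mul_sub, sub_mul, one_mul, mul_one, Matrix.mul_smul,
    mul_vecMulVec, smul_sub]
  abel

theorem list_prod_ofFn_one_sub_smul_vecMulVec {r : ℕ} (U W : Matrix m (Fin r) K)
    (S : Matrix (Fin r) (Fin r) K) (hS : S.BlockTriangular id)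
    (hSU : ∀ i j, i < j → S i j = (Uᵀ * U) i j) (hdiag : ∀ j, S j j ≠ 0) (hWS : W * S = U) :
    (List.ofFn fun j => 1 - (S j j)⁻¹ • vecMulVec (Uᵀ j) (Uᵀ j)).prod = 1 - W * Uᵀ := by
  induction r with
  | zero => ext; simp
  | succ r ih =>
    set U' := U.submatrix id Fin.castSucc
    set W' := W.submatrix id Fin.castSucc
    have hWS' : W' * S.submatrix Fin.castSucc Fin.castSucc = U' := by
      ext a j
      have hzero : S (Fin.last r) j.castSucc = 0 := hS (Fin.castSucc_lt_last j)
      simpa [W', U', mul_apply, Fin.sum_univ_castSucc, hzero]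
        using congrFun₂ hWS a j.castSucc
    have hlast : S (Fin.last r) (Fin.last r) • Wᵀ (Fin.last r) + (W' * U'ᵀ) *ᵥ Uᵀ (Fin.last r)
        = Uᵀ (Fin.last r) := by
      have hcol : U'ᵀ *ᵥ Uᵀ (Fin.last r) = fun i => S i.castSucc (Fin.last r) := by
        ext i
        simp [U', hSU _ _ (Fin.castSucc_lt_last i), mulVec, dotProduct, mul_apply]
      rw [← mulVec_mulVec, hcol]
      ext a
      simpa [W', mulVec, dotProduct, mul_apply, Fin.sum_univ_castSucc, add_comm, mul_comm]
        using congrFun₂ hWS a (Fin.last r)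
    rw [List.ofFn_succ', List.prod_concat, mul_transpose_eq_submatrix_castSucc_add_vecMulVec,
      ← one_sub_mul_one_sub_smul_vecMulVec (hdiag _) hlast]
    congr 1
    refine ih U' W' (S.submatrix Fin.castSucc Fin.castSucc) (fun i j h => hS h)
      (fun i j h => ?_) (fun j => hdiag _) hWS'
    simpa [mul_apply, U'] using hSU _ _ (Fin.castSucc_lt_castSucc_iff.2 h)

end Field

end Matrix

section cwyS

variable {m r : ℕ} (U : Matrix (Fin m) (Fin r) ℝ)

theorem cwyS_blockTriangular : (cwyS U).BlockTriangular id := fun i j (h : j < i) => by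
  simp [cwyS, h.ne', h.not_gt]

theorem cwyS_apply_of_lt {i j : Fin r} (h : i < j) : cwyS U i j = (Uᵀ * U) i j := by
  simp [cwyS, h.ne, h]

theorem cwyS_apply_self (i : Fin r) : cwyS U i i = (∑ k, U k i ^ 2) / 2 := by
  simp [cwyS, mul_apply, sq]

end cwyS

theorem cwy_transform (m r : ℕ) (U : Matrix (Fin m) (Fin r) ℝ)
    (hU : LinearIndependent ℝ (fun j : Fin r => Uᵀ j))
    (τ : Fin r → ℝ) (hτ0 : ∀ i, τ i ≠ 0)
    (hτ : ∀ i, τ i = (∑ k, U k i ^ 2) / 2) :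
    (∃! S : Matrix (Fin r) (Fin r) ℝ,
      S.BlockTriangular id ∧ IsUnit S ∧
      (List.ofFn fun i : Fin r =>
          (1 : Matrix (Fin m) (Fin m) ℝ)
            - (τ i)⁻¹ • vecMulVec (fun k => U k i) (fun k => U k i)).prod
        = 1 - U * S⁻¹ * Uᵀ) ∧
    (cwyS U).BlockTriangular id ∧ IsUnit (cwyS U) ∧
    (List.ofFn fun i : Fin r =>
        (1 : Matrix (Fin m) (Fin m) ℝ)
          - (τ i)⁻¹ • vecMulVec (fun k => U k i) (fun k => U k i)).prod
      = 1 - U * (cwyS U)⁻¹ * Uᵀ := by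
  have hdiag (i : Fin r) : cwyS U i i = τ i := (cwyS_apply_self U i).trans (hτ i).symm
  have hdiag_ne (i : Fin r) : cwyS U i i ≠ 0 := hdiag i ▸ hτ0 i
  have hunit : IsUnit (cwyS U) := isUnit_of_isUpperTriangular (cwyS_blockTriangular U) hdiag_ne
  have hprod : (List.ofFn fun i : Fin r => (1 : Matrix (Fin m) (Fin m) ℝ)
      - (τ i)⁻¹ • vecMulVec (fun k => U k i) (fun k => U k i)).prod
        = 1 - U * (cwyS U)⁻¹ * Uᵀ := by
    simp_rw [← hdiag]
    refine list_prod_ofFn_one_sub_smul_vecMulVec U _ _ (cwyS_blockTriangular U)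
      (fun _ _ => cwyS_apply_of_lt U) hdiag_ne ?_
    rw [Matrix.mul_assoc, nonsing_inv_mul _ (isUnit_iff_isUnit_det _ |>.1 hunit), Matrix.mul_one]
  refine ⟨⟨cwyS U, ⟨cwyS_blockTriangular U, hunit, hprod⟩, ?_⟩, cwyS_blockTriangular U, hunit, hprod⟩
  rintro T ⟨-, hT, hTprod⟩
  refine inv_inj ?_ ((isUnit_iff_isUnit_det T).1 hT)
  exact eq_of_mul_mul_transpose_eq hU (sub_right_injective (hTprod.symm.trans hprod))
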